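/- Let (M, τ, h) be a Galilei manifold, v a unit timelike vector field, and ∇̊ the special Galilei connection with coefficients Γ̊^ρ_{μν} = v^ρ ∂_μ τ_ν + (1/2) h^{ρσ}(∂_μ h_{νσ} + ∂_ν h_{μσ} − ∂_σ h_{μν}). Then ∇̊ h = 0, i.e. ∇̊_μ h^{ρσ} = ∂_μ h^{ρσ} + Γ̊^ρ_{μλ} h^{λσ} + Γ̊^σ_{μλ} h^{ρλ} = 0. -/

import Mathlib

/-- Partial derivative `∂_μ f` of a function on `ℝ^N` (coordinate chart). -/
noncomputable def pd {N : ℕ} (μ : Fin N) (f : (Fin N → ℝ) → ℝ) (x : Fin N → ℝ) : ℝ :=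
  fderiv ℝ f x (Pi.single μ 1)

/-- Covariant derivative `∇_μ τ_ν = ∂_μ τ_ν − Γ^λ_{μν} τ_λ` of a one-form, in coordinates. -/
noncomputable def covTau {N : ℕ} (Γ : (Fin N → ℝ) → Fin N → Fin N → Fin N → ℝ)
    (τ : (Fin N → ℝ) → Fin N → ℝ) (x : Fin N → ℝ) (μ ν : Fin N) : ℝ :=
  pd μ (fun y => τ y ν) x - ∑ l, Γ x l μ ν * τ x l

/-- Covariant derivative `∇_ρ v^κ = ∂_ρ v^κ + Γ^κ_{ρλ} v^λ` of a vector field. -/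
noncomputable def covVec {N : ℕ} (Γ : (Fin N → ℝ) → Fin N → Fin N → Fin N → ℝ)
    (v : (Fin N → ℝ) → Fin N → ℝ) (x : Fin N → ℝ) (ρ κ : Fin N) : ℝ :=
  pd ρ (fun y => v y κ) x + ∑ l, Γ x κ ρ l * v x l

/-- Covariant derivative `∇_ρ h^{μν}` of a contravariant 2-tensor. -/
noncomputable def covHup {N : ℕ} (Γ : (Fin N → ℝ) → Fin N → Fin N → Fin N → ℝ)
    (h : (Fin N → ℝ) → Fin N → Fin N → ℝ) (x : Fin N → ℝ) (ρ μ ν : Fin N) : ℝ :=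
  pd ρ (fun y => h y μ ν) x + (∑ l, Γ x μ ρ l * h x l ν) + ∑ l, Γ x ν ρ l * h x μ l

/-- Covariant derivative `∇_ρ h_{μν}` of a covariant 2-tensor. -/
noncomputable def covHdown {N : ℕ} (Γ : (Fin N → ℝ) → Fin N → Fin N → Fin N → ℝ)
    (hc : (Fin N → ℝ) → Fin N → Fin N → ℝ) (x : Fin N → ℝ) (ρ μ ν : Fin N) : ℝ :=
  pd ρ (fun y => hc y μ ν) x - (∑ l, Γ x l ρ μ * hc x l ν) - ∑ l, Γ x l ρ ν * hc x μ l

/-- Coefficients of the special Galilei connection determined by a unit timelike vector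
field `v`: `Γ̊^ρ_{μν} = v^ρ ∂_μ τ_ν + ½ h^{ρσ}(∂_μ h_{νσ} + ∂_ν h_{μσ} − ∂_σ h_{μν})`. -/
noncomputable def specialGamma {N : ℕ}
    (τ : (Fin N → ℝ) → Fin N → ℝ) (h hc : (Fin N → ℝ) → Fin N → Fin N → ℝ)
    (v : (Fin N → ℝ) → Fin N → ℝ) (x : Fin N → ℝ) (ρ μ ν : Fin N) : ℝ :=
  v x ρ * pd μ (fun y => τ y ν) x +
    (1 / 2) * ∑ σ, h x ρ σ *
      (pd μ (fun y => hc y ν σ) x + pd ν (fun y => hc y μ σ) x - pd σ (fun y => hc y μ ν) x)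

/-!
Fix a point and a derivative index `μ`; write `H, C, T, V` for `h^{..}, h_{..}, τ, v` there and
primes for `∂_μ`. In matrix form `Γ̊^·_{μ·} = V ⊗ T' + ½ H (C' + D - Dᵀ)ᵀ` with
`D_{la} = ∂_l h_{μa}`, and `∇̊_μ h = H' + Γ̊ H + H Γ̊ᵀ`; the antisymmetric `D - Dᵀ` drops out of
the symmetrised sum. Differentiating `T H = 0` and `C H = 1 - T ⊗ V` gives `T' H = -T H'` and,
since `H C = 1 - V ⊗ T` and `H T = 0`, `H C' H = -H' + V ⊗ w + w ⊗ V` with `w = T H'`.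
Substituting, everything cancels.
-/

open Matrix

section Algebra

variable {ι K : Type*} [Fintype ι] [DecidableEq ι] [Field K]
  {H C H' C' : Matrix ι ι K} {T V T' V' : ι → K}

theorem mul_deriv_mul_eq_neg_add_vecMulVec (hH : Hᵀ = H) (hC : Cᵀ = C) (hTH : T ᵥ* H = 0)
    (hCH : C * H = 1 - vecMulVec T V) (hTH' : T' ᵥ* H + T ᵥ* H' = 0)
    (hCH' : C' * H + C * H' = -(vecMulVec T' V + vecMulVec T V')) :
    H * C' * H = -H' + vecMulVec V (T ᵥ* H') + vecMulVec (T ᵥ* H') V := by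
  have hHC : H * C = 1 - vecMulVec V T := by
    rw [← transpose_transpose (H * C), transpose_mul, hH, hC, hCH, transpose_sub, transpose_one,
      transpose_vecMulVec]
  have hHv (u : ι → K) : H *ᵥ u = u ᵥ* H := by rw [← mulVec_transpose, hH]
  calc H * C' * H = H * (C' * H + C * H') - H * C * H' := by noncomm_ring
    _ = _ := by
      rw [hCH', hHC, mul_neg, mul_add, mul_vecMulVec, mul_vecMulVec, hHv, hHv, hTH,
        eq_neg_of_add_eq_zero_left hTH', sub_mul, vecMulVec_mul, zero_vecMulVec, neg_vecMulVec,
        Matrix.one_mul]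
      abel

theorem add_mul_add_mul_transpose_eq_zero [NeZero (2 : K)] (D : Matrix ι ι K)
    (hH : Hᵀ = H) (hC : Cᵀ = C) (hH' : H'ᵀ = H') (hTH : T ᵥ* H = 0)
    (hCH : C * H = 1 - vecMulVec T V) (hTH' : T' ᵥ* H + T ᵥ* H' = 0)
    (hCH' : C' * H + C * H' = -(vecMulVec T' V + vecMulVec T V')) :
    let G := vecMulVec V T' + (1 / 2 : K) • (H * (C' + D - Dᵀ)ᵀ)
    H' + G * H + H * Gᵀ = 0 := by
  intro G
  have hT'H : T' ᵥ* H = -(T ᵥ* H') := eq_neg_of_add_eq_zero_left hTH'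
  have hHT' : H *ᵥ T' = -(T ᵥ* H') := by rw [← hT'H, ← mulVec_transpose, hH]
  have hGH : G * H = vecMulVec V (T' ᵥ* H) + (1 / 2 : K) • ((H * C' * H)ᵀ + H * (Dᵀ - D) * H) := by
    simp only [G, transpose_mul, hH, transpose_sub, transpose_add, transpose_transpose, add_mul,
      vecMulVec_mul, smul_mul]
    congr 2; noncomm_ring
  have hHG : H * Gᵀ = vecMulVec (H *ᵥ T') V + (1 / 2 : K) • (H * C' * H - H * (Dᵀ - D) * H) := by
    simp only [G, transpose_add, transpose_smul, transpose_mul, transpose_transpose,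
      transpose_vecMulVec, hH, mul_add, mul_vecMulVec]
    congr 2; noncomm_ring
  rw [hGH, hHG, mul_deriv_mul_eq_neg_add_vecMulVec hH hC hTH hCH hTH' hCH', hT'H, hHT']
  simp only [transpose_add, transpose_neg, transpose_vecMulVec, hH', vecMulVec_neg, neg_vecMulVec]
  match_scalars <;> field_simp <;> ring

end Algebra

section Calculus

variable {N : ℕ} {ι κ : Type*} (μ : Fin N) (x : Fin N → ℝ)

noncomputable def pdVec (u : (Fin N → ℝ) → ι → ℝ) : ι → ℝ :=
  fun a => pd μ (fun y => u y a) x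

noncomputable def pdMat (A : (Fin N → ℝ) → Matrix ι κ ℝ) : Matrix ι κ ℝ :=
  Matrix.of fun a b => pd μ (fun y => A y a b) x

theorem pd_const (c : ℝ) : pd μ (fun _ => c) x = 0 := by
  simp [pd]

theorem pd_const_sub (c : ℝ) (f : (Fin N → ℝ) → ℝ) :
    pd μ (fun y => c - f y) x = -pd μ f x := by
  simp [pd, fderiv_const_sub]

theorem pd_mul {f g : (Fin N → ℝ) → ℝ} (hf : DifferentiableAt ℝ f x)
    (hg : DifferentiableAt ℝ g x) :
    pd μ (fun y => f y * g y) x = pd μ f x * g x + f x * pd μ g x := by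
  simp only [pd, fderiv_fun_mul hf hg, _root_.add_apply, _root_.smul_apply, smul_eq_mul]
  ring

theorem pd_sum_mul [Fintype ι] {f g : ι → (Fin N → ℝ) → ℝ}
    (hf : ∀ i, DifferentiableAt ℝ (f i) x) (hg : ∀ i, DifferentiableAt ℝ (g i) x) :
    pd μ (fun y => ∑ i, f i y * g i y) x =
      ∑ i, (pd μ (f i) x * g i x + f i x * pd μ (g i) x) := by
  rw [pd, fderiv_fun_sum (A := fun i y => f i y * g i y) fun i _ => (hf i).mul (hg i),
    _root_.sum_apply]
  exact Finset.sum_congr rfl fun i _ => pd_mul μ x (hf i) (hg i)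

theorem pdVec_vecMul [Fintype ι] {u : (Fin N → ℝ) → ι → ℝ} {A : (Fin N → ℝ) → Matrix ι κ ℝ}
    (hu : ∀ a, DifferentiableAt ℝ (fun y => u y a) x)
    (hA : ∀ a b, DifferentiableAt ℝ (fun y => A y a b) x) :
    pdVec μ x (fun y => u y ᵥ* A y) = pdVec μ x u ᵥ* A x + u x ᵥ* pdMat μ x A := by
  ext b
  simp only [pdVec, pdMat, vecMul, dotProduct, Pi.add_apply, of_apply,
    pd_sum_mul μ x hu fun a => hA a b, Finset.sum_add_distrib]

theorem pdMat_mul [Fintype ι] {ι' : Type*} {A : (Fin N → ℝ) → Matrix ι' ι ℝ}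
    {B : (Fin N → ℝ) → Matrix ι κ ℝ}
    (hA : ∀ a b, DifferentiableAt ℝ (fun y => A y a b) x)
    (hB : ∀ a b, DifferentiableAt ℝ (fun y => B y a b) x) :
    pdMat μ x (fun y => A y * B y) = pdMat μ x A * B x + A x * pdMat μ x B := by
  ext a b
  simp only [pdMat, mul_apply, Matrix.add_apply, of_apply,
    pd_sum_mul μ x (hA a) fun c => hB c b, Finset.sum_add_distrib]

theorem pdMat_const_sub_vecMulVec {u : (Fin N → ℝ) → ι → ℝ} {w : (Fin N → ℝ) → κ → ℝ}
    (hu : ∀ a, DifferentiableAt ℝ (fun y => u y a) x)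
    (hw : ∀ b, DifferentiableAt ℝ (fun y => w y b) x) (c : Matrix ι κ ℝ) :
    pdMat μ x (fun y => c - vecMulVec (u y) (w y)) =
      -(vecMulVec (pdVec μ x u) (w x) + vecMulVec (u x) (pdVec μ x w)) := by
  ext a b
  simp only [pdMat, pdVec, Matrix.sub_apply, vecMulVec_apply, of_apply, Matrix.neg_apply,
    Matrix.add_apply, pd_const_sub, pd_mul μ x (hu a) (hw b)]

theorem pdMat_transpose (A : (Fin N → ℝ) → Matrix ι κ ℝ) :
    pdMat μ x (fun y => (A y)ᵀ) = (pdMat μ x A)ᵀ := rfl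

end Calculus

section Coordinates

variable {N : ℕ} (τ v : (Fin N → ℝ) → Fin N → ℝ) (h hc : (Fin N → ℝ) → Matrix (Fin N) (Fin N) ℝ)
  (x : Fin N → ℝ) (μ : Fin N)

theorem of_covHup_eq (Γ : (Fin N → ℝ) → Fin N → Fin N → Fin N → ℝ) :
    let G : Matrix (Fin N) (Fin N) ℝ := Matrix.of fun p l => Γ x p μ l
    Matrix.of (fun ρ σ => covHup Γ h x μ ρ σ) = pdMat μ x h + G * h x + h x * Gᵀ := by
  ext ρ σ
  simp only [covHup, pdMat, of_apply, Matrix.add_apply, mul_apply, transpose_apply, mul_comm]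

theorem of_specialGamma_eq :
    let D : Matrix (Fin N) (Fin N) ℝ := Matrix.of fun l a => pd l (fun y => hc y μ a) x
    Matrix.of (fun ρ ν => specialGamma τ h hc v x ρ μ ν) =
      vecMulVec (v x) (pdVec μ x τ) + (1 / 2 : ℝ) • (h x * (pdMat μ x hc + D - Dᵀ)ᵀ) := by
  ext ρ ν
  simp only [specialGamma, pdVec, pdMat, of_apply, Matrix.add_apply, Matrix.smul_apply,
    vecMulVec_apply, mul_apply, transpose_apply, Matrix.sub_apply, smul_eq_mul]

theorem of_covHup_specialGamma_eq_zero
    (dτ : ∀ a, DifferentiableAt ℝ (fun y => τ y a) x)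
    (dv : ∀ a, DifferentiableAt ℝ (fun y => v y a) x)
    (dh : ∀ a b, DifferentiableAt ℝ (fun y => h y a b) x)
    (dhc : ∀ a b, DifferentiableAt ℝ (fun y => hc y a b) x)
    (hH : ∀ y, (h y)ᵀ = h y) (hC : ∀ y, (hc y)ᵀ = hc y) (hTH : ∀ y, τ y ᵥ* h y = 0)
    (hCH : ∀ y, hc y * h y = 1 - vecMulVec (τ y) (v y)) :
    Matrix.of (fun ρ σ => covHup (fun x ρ μ ν => specialGamma τ h hc v x ρ μ ν) h x μ ρ σ) = 0 := by
  have hH' : (pdMat μ x h)ᵀ = pdMat μ x h := by rw [← pdMat_transpose, funext hH]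
  have hTH' : pdVec μ x τ ᵥ* h x + τ x ᵥ* pdMat μ x h = 0 := by
    rw [← pdVec_vecMul μ x dτ dh, funext hTH]
    exact funext fun _ => pd_const μ x 0
  have hCH' : pdMat μ x hc * h x + hc x * pdMat μ x h =
      -(vecMulVec (pdVec μ x τ) (v x) + vecMulVec (τ x) (pdVec μ x v)) := by
    rw [← pdMat_mul μ x dhc dh, funext hCH, pdMat_const_sub_vecMulVec μ x dτ dv]
  rw [of_covHup_eq, of_specialGamma_eq]
  exact add_mul_add_mul_transpose_eq_zero _ (hH x) (hC x) hH' (hTH x) (hCH x) hTH' hCH'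

end Coordinates

theorem special_connection_space_metric_parallel_general (n : ℕ)
    (τ : (Fin (n + 1) → ℝ) → Fin (n + 1) → ℝ)
    (h hc : (Fin (n + 1) → ℝ) → Fin (n + 1) → Fin (n + 1) → ℝ)
    (v : (Fin (n + 1) → ℝ) → Fin (n + 1) → ℝ)
    (hτsm : ∀ ν, ContDiff ℝ (⊤ : ℕ∞) fun x => τ x ν)
    (hhsm : ∀ μ ν, ContDiff ℝ (⊤ : ℕ∞) fun x => h x μ ν)
    (hhcsm : ∀ μ ν, ContDiff ℝ (⊤ : ℕ∞) fun x => hc x μ ν)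
    (hvsm : ∀ μ, ContDiff ℝ (⊤ : ℕ∞) fun x => v x μ)
    (hsymm : ∀ x μ ν, h x μ ν = h x ν μ)
    (hcsymm : ∀ x μ ν, hc x μ ν = hc x ν μ)
    (hτh : ∀ x σ, ∑ ρ, τ x ρ * h x ρ σ = 0)
    (hch : ∀ x μ ν, ∑ κ, hc x μ κ * h x κ ν = (if μ = ν then (1 : ℝ) else 0) - τ x μ * v x ν) :
    ∀ x μ ρ σ, covHup (fun x ρ μ ν => specialGamma τ h hc v x ρ μ ν) h x μ ρ σ = 0 := by
  intro x μ ρ σ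
  have key := of_covHup_specialGamma_eq_zero τ v h hc x μ
    (fun a => (hτsm a).differentiable (by simp) x) (fun a => (hvsm a).differentiable (by simp) x)
    (fun a b => (hhsm a b).differentiable (by simp) x)
    (fun a b => (hhcsm a b).differentiable (by simp) x)
    (fun y => funext₂ fun a b => hsymm y b a) (fun y => funext₂ fun a b => hcsymm y b a)
    (fun y => funext (hτh y))
    (fun y => Matrix.ext (hch y))
  exact congrFun₂ key ρ σ

/-- On a Galilei manifold with unit timelike vector field `v`, the special
Galilei connection `Γ̊` satisfies `∇̊h = 0`, i.e.
`∂_μ h^{ρσ} + Γ̊^ρ_{μλ} h^{λσ} + Γ̊^σ_{μλ} h^{ρλ} = 0` (in local coordinates). -/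
theorem special_connection_space_metric_parallel (n : ℕ)
    (τ : (Fin (n + 1) → ℝ) → Fin (n + 1) → ℝ)
    (h hc : (Fin (n + 1) → ℝ) → Fin (n + 1) → Fin (n + 1) → ℝ)
    (v : (Fin (n + 1) → ℝ) → Fin (n + 1) → ℝ)
    (hτsm : ∀ ν, ContDiff ℝ (⊤ : ℕ∞) fun x => τ x ν)
    (hhsm : ∀ μ ν, ContDiff ℝ (⊤ : ℕ∞) fun x => h x μ ν)
    (hhcsm : ∀ μ ν, ContDiff ℝ (⊤ : ℕ∞) fun x => hc x μ ν)
    (hvsm : ∀ μ, ContDiff ℝ (⊤ : ℕ∞) fun x => v x μ)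
    (hsymm : ∀ x μ ν, h x μ ν = h x ν μ)
    (hcsymm : ∀ x μ ν, hc x μ ν = hc x ν μ)
    (hτh : ∀ x σ, ∑ ρ, τ x ρ * h x ρ σ = 0)
    (hτv : ∀ x, ∑ ρ, τ x ρ * v x ρ = 1)
    (hcv : ∀ x μ, ∑ ν, hc x μ ν * v x ν = 0)
    (hch : ∀ x μ ν, ∑ κ, hc x μ κ * h x κ ν = (if μ = ν then (1 : ℝ) else 0) - τ x μ * v x ν) :
    ∀ x μ ρ σ, covHup (fun x ρ μ ν => specialGamma τ h hc v x ρ μ ν) h x μ ρ σ = 0 :=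
  special_connection_space_metric_parallel_general n τ h hc v hτsm hhsm hhcsm hvsm hsymm hcsymm hτh
    hch
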